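/- arXiv:1702.01889 — 8 statements merged into one kernel-verified Lean document; each statement's English description precedes it below -/
import Mathlib

section
/- Let E be a metric space, Ω a measurable space, μ a probability measure on Ω, f : Ω → E a measurable map, and (a_n) a sequence of points of E such that the integrated distance ∫⁻ edist(f(t), a_n) dμ(t) tends to 0 as n → ∞. Then there exists a ∈ E such that f(t) = a for μ-almost every t. -/
open MeasureTheory Filter Topology

namespace MeasureTheory

variable {α ι E : Type*} {m : MeasurableSpace α} {μ : Measure α}

theorem tendstoInMeasure_of_tendsto_lintegral_edist [EDist E] {l : Filter ι}
    {f : ι → α → E} {g : α → E}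
    (hmeas : ∀ i, AEMeasurable (fun x => edist (f i x) (g x)) μ)
    (h : Tendsto (fun i => ∫⁻ x, edist (f i x) (g x) ∂μ) l (𝓝 0)) :
    TendstoInMeasure μ f l g := by
  refine tendstoInMeasure_of_ne_top fun ε hε hε_top => ?_
  have hdiv : Tendsto (fun i => (∫⁻ x, edist (f i x) (g x) ∂μ) / ε) l (𝓝 0) := by
    simpa using ENNReal.Tendsto.div_const h (Or.inr hε.ne')
  exact tendsto_of_tendsto_of_tendsto_of_le_of_le tendsto_const_nhds hdiv (fun _ => zero_le)
    fun i => meas_ge_le_lintegral_div (hmeas i) hε.ne' hε_top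

/-- Along a subsequence the constants converge to `g x` for almost every `x`; since `μ ≠ 0` one
such `x` exists, and uniqueness of limits pins `g` to its value there. -/
theorem TendstoInMeasure.exists_ae_eq_const [EMetricSpace E] [NeZero μ] {a : ℕ → E}
    {g : α → E} (h : TendstoInMeasure μ (fun n _ => a n) atTop g) :
    ∃ c, ∀ᵐ x ∂μ, g x = c := by
  obtain ⟨ns, -, hlim⟩ := h.exists_seq_tendsto_ae
  obtain ⟨x₀, hx₀⟩ := hlim.exists
  exact ⟨g x₀, hlim.mono fun x hx => tendsto_nhds_unique hx hx₀⟩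

end MeasureTheory

/-- The constant maps form a closed subset of `L(Ω,E)`: if the integrated distance from a
measurable map `f` to a sequence of constants `a n` tends to `0`, then `f` is a.e. constant. -/
theorem stmt5 {E Ω : Type*} [MetricSpace E] [MeasurableSpace E] [BorelSpace E]
    [MeasurableSpace Ω] (μ : Measure Ω) [IsProbabilityMeasure μ]
    (f : Ω → E) (hf : Measurable f)
    (a : ℕ → E)
    (hconv : Filter.Tendsto (fun n => ∫⁻ t, edist (f t) (a n) ∂μ)
      Filter.atTop (nhds 0)) :
    ∃ c : E, ∀ᵐ t ∂μ, f t = c := by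
  have hin : TendstoInMeasure μ (fun n _ => a n) atTop f :=
    tendstoInMeasure_of_tendsto_lintegral_edist
      (fun n => (measurable_edist_right.comp hf).aemeasurable)
      (by simpa only [edist_comm] using hconv)
  exact hin.exists_ae_eq_const
end

section
/- Let A and B be metric spaces with their Borel σ-algebras, φ : A → B a uniformly continuous map whose range is a bounded subset of B, Ω a measurable space, and μ a probability measure on Ω. Then for every ε > 0 there exists η > 0 such that for all measurable maps f, g : Ω → A with ∫⁻ edist(f(t), g(t)) dμ(t) ≤ η, one has ∫⁻ edist(φ(f(t)), φ(g(t))) dμ(t) ≤ ε. -/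
open MeasureTheory ENNReal
open scoped NNReal

/-! Uniform continuity controls `edist (φ x) (φ y)` by `ε` when `edist x y < δ`, and boundedness
controls it by `diam (range φ) ≤ (diam (range φ) / δ) * edist x y` otherwise. Hence
`edist (φ x) (φ y) ≤ ε + r * edist x y` for a finite `r`, and integrating this against a
probability measure gives `∫⁻ edist (φ ∘ f) (φ ∘ g) ≤ ε + r * ∫⁻ edist f g`, so that
`η = ε / (r + 1)` works for `2 ε`. -/

theorem UniformContinuous.exists_edist_le_add_mul_edist {α β : Type*} [PseudoEMetricSpace α]
    [PseudoEMetricSpace β] {φ : α → β} (hφ : UniformContinuous φ)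
    (hbd : Metric.ediam (Set.range φ) ≠ ⊤) {ε : ℝ≥0∞} (hε : 0 < ε) :
    ∃ r : ℝ≥0, ∀ x y, edist (φ x) (φ y) ≤ ε + r * edist x y := by
  obtain ⟨δ, hδ0, hδ⟩ := EMetric.uniformContinuous_iff.mp hφ ε hε
  -- `δ` may be `⊤`, and `C / ⊤ = 0` would then lose the bound for distant points.
  set δ' := min δ 1
  have hδ'0 : δ' ≠ 0 := (lt_min hδ0 one_pos).ne'
  have hδ'top : δ' ≠ ⊤ := ne_top_of_le_ne_top one_ne_top (min_le_right _ _)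
  set C := Metric.ediam (Set.range φ)
  have hr : C / δ' ≠ ⊤ := (ENNReal.div_lt_top hbd hδ'0).ne
  refine ⟨(C / δ').toNNReal, fun x y => ?_⟩
  rw [coe_toNNReal hr]
  rcases lt_or_ge (edist x y) δ' with hclose | hfar
  · exact le_add_right (hδ (hclose.trans_le (min_le_left _ _))).le
  · calc edist (φ x) (φ y) ≤ C :=
          Metric.edist_le_ediam_of_mem (Set.mem_range_self _) (Set.mem_range_self _)
      _ = C / δ' * δ' := (ENNReal.div_mul_cancel hδ'0 hδ'top).symm
      _ ≤ C / δ' * edist x y := by gcongr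
      _ ≤ ε + C / δ' * edist x y := le_add_self

theorem MeasureTheory.lintegral_le_mul_measure_univ_add_mul {Ω : Type*} [MeasurableSpace Ω]
    (μ : Measure Ω) {d e : Ω → ℝ≥0∞} {c : ℝ≥0∞} {r : ℝ≥0} (h : ∀ t, d t ≤ c + r * e t) :
    ∫⁻ t, d t ∂μ ≤ c * μ Set.univ + r * ∫⁻ t, e t ∂μ :=
  calc ∫⁻ t, d t ∂μ ≤ ∫⁻ t, c + r * e t ∂μ := lintegral_mono h
    _ = c * μ Set.univ + r * ∫⁻ t, e t ∂μ := by
      rw [lintegral_add_left measurable_const, lintegral_const, lintegral_const_mul' _ _ coe_ne_top]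

theorem stmt7_general {A B Ω : Type*} [MetricSpace A] [MeasurableSpace A]
    [MetricSpace B]
    [MeasurableSpace Ω] (μ : Measure Ω) [IsProbabilityMeasure μ]
    (φ : A → B) (hφ : UniformContinuous φ)
    (hbd : Bornology.IsBounded (Set.range φ))
    (ε : ℝ≥0∞) (hε : 0 < ε) :
    ∃ η : ℝ≥0∞, 0 < η ∧ ∀ f g : Ω → A, Measurable f → Measurable g →
      ∫⁻ t, edist (f t) (g t) ∂μ ≤ η →
      ∫⁻ t, edist (φ (f t)) (φ (g t)) ∂μ ≤ ε := by
  have hε2 : 0 < ε / 2 := ENNReal.half_pos hε.ne'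
  obtain ⟨r, hr⟩ :=
    hφ.exists_edist_le_add_mul_edist (Metric.isBounded_iff_ediam_ne_top.mp hbd) hε2
  refine ⟨ε / 2 / (r + 1), ENNReal.div_pos hε2.ne' (by simp), fun f g _ _ hfg => ?_⟩
  calc ∫⁻ t, edist (φ (f t)) (φ (g t)) ∂μ
      ≤ ε / 2 * μ Set.univ + r * ∫⁻ t, edist (f t) (g t) ∂μ :=
        lintegral_le_mul_measure_univ_add_mul μ fun t => hr (f t) (g t)
    _ ≤ ε / 2 + (r + 1) * (ε / 2 / (r + 1)) := by
        rw [measure_univ, mul_one]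
        gcongr
        exact le_self_add
    _ ≤ ε / 2 + ε / 2 := by gcongr; exact ENNReal.mul_div_le
    _ = ε := ENNReal.add_halves ε

/-- A uniformly continuous map with bounded range induces a uniformly continuous map
on the spaces of measurable maps equipped with the integrated distance. -/
theorem stmt7 {A B Ω : Type*} [MetricSpace A] [MeasurableSpace A] [BorelSpace A]
    [MetricSpace B] [MeasurableSpace B] [BorelSpace B]
    [MeasurableSpace Ω] (μ : Measure Ω) [IsProbabilityMeasure μ]
    (φ : A → B) (hφ : UniformContinuous φ)
    (hbd : Bornology.IsBounded (Set.range φ))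
    (ε : ℝ≥0∞) (hε : 0 < ε) :
    ∃ η : ℝ≥0∞, 0 < η ∧ ∀ f g : Ω → A, Measurable f → Measurable g →
      ∫⁻ t, edist (f t) (g t) ∂μ ≤ η →
      ∫⁻ t, edist (φ (f t)) (φ (g t)) ∂μ ≤ ε :=
  stmt7_general μ φ hφ hbd ε hε
end

section
/- Let E be a metric space and Γ a group acting on E by isometries. Let B be the set of Γ-orbits with the quotient topology, p : E → B the quotient map, and define D : B × B → ℝ by D(b₁, b₂) = inf { dist(y₁, y₂) : y₁, y₂ ∈ E, p(y₁) = b₁, p(y₂) = b₂ }. Assume p is a covering map. Then for every x ∈ E there exist δ > 0 and a map s : B → E such that s(p(x)) = x and, for all b, b₁, b₂ ∈ B with D(b, p(x)) < δ, D(b₁, p(x)) < δ and D(b₂, p(x)) < δ, one has p(s(b)) = b and dist(s(b₁), s(b₂)) = D(b₁, b₂). -/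
/-!
A covering map is locally injective, so the orbit map is injective on some ball `B(x, ε)`.
If `y, z` lie within `ε / 4` of `x`, a translate `g • z` closer to `y` than `z` would still lie
in `B(x, ε)` and in the orbit of `z`, hence equal `z`; so `dist y z` realizes the distance
between the orbits of `y` and `z`. The section picks, for each orbit at distance `< ε / 4`
from that of `x`, a representative within `ε / 4` of `x`.
-/

open MulAction Metric

noncomputable def orbitDist (Γ : Type*) {E : Type*} [Group Γ] [MulAction Γ E]
    [PseudoMetricSpace E] (b₁ b₂ : Quotient (orbitRel Γ E)) : ℝ :=
  sInf {r : ℝ | ∃ y₁ y₂ : E, Quotient.mk (orbitRel Γ E) y₁ = b₁ ∧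
    Quotient.mk (orbitRel Γ E) y₂ = b₂ ∧ dist y₁ y₂ = r}

section

variable {Γ E : Type*} [Group Γ] [MulAction Γ E] [PseudoMetricSpace E]

theorem orbitDist_mk_mk [IsIsometricSMul Γ E] (y z : E) :
    orbitDist Γ (Quotient.mk (orbitRel Γ E) y) (Quotient.mk (orbitRel Γ E) z) =
      ⨅ g : Γ, dist y (g • z) := by
  show sInf _ = sInf (Set.range _)
  congr 1
  ext r
  constructor
  · rintro ⟨y₁, y₂, h₁, h₂, rfl⟩
    obtain ⟨g₁, rfl⟩ := Quotient.exact h₁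
    obtain ⟨g₂, rfl⟩ := Quotient.exact h₂
    refine ⟨g₁⁻¹ * g₂, ?_⟩
    show dist y ((g₁⁻¹ * g₂) • z) = dist (g₁ • y) (g₂ • z)
    rw [← dist_smul g₁ y, smul_smul, mul_inv_cancel_left]
  · rintro ⟨g, rfl⟩
    exact ⟨y, g • z, rfl, Quotient.sound (mem_orbit z g), rfl⟩

theorem exists_dist_lt_of_orbitDist_lt [IsIsometricSMul Γ E] {b : Quotient (orbitRel Γ E)}
    {x : E} {δ : ℝ} (h : orbitDist Γ b (Quotient.mk (orbitRel Γ E) x) < δ) :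
    ∃ y, Quotient.mk (orbitRel Γ E) y = b ∧ dist y x < δ := by
  obtain ⟨y, rfl⟩ := Quotient.mk_surjective b
  rw [orbitDist_mk_mk] at h
  obtain ⟨g, hg⟩ := exists_lt_of_ciInf_lt h
  exact ⟨g⁻¹ • y, Quotient.sound (mem_orbit y g⁻¹), by rwa [← dist_smul g, smul_inv_smul]⟩

theorem orbitDist_mk_mk_eq_dist [IsIsometricSMul Γ E] {y z : E}
    (h : ∀ g : Γ, dist y z ≤ dist y (g • z)) :
    orbitDist Γ (Quotient.mk (orbitRel Γ E) y) (Quotient.mk (orbitRel Γ E) z) = dist y z := by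
  rw [orbitDist_mk_mk]
  refine le_antisymm ?_ (le_ciInf h)
  have hbdd : BddBelow (Set.range fun g : Γ => dist y (g • z)) :=
    ⟨0, by rintro _ ⟨g, rfl⟩; exact dist_nonneg⟩
  simpa using ciInf_le hbdd 1

theorem dist_le_dist_smul_of_injOn_ball {x y z : E} {ε : ℝ}
    (hinj : (ball x ε).InjOn (Quotient.mk (orbitRel Γ E)))
    (hy : y ∈ ball x (ε / 4)) (hz : z ∈ ball x (ε / 4)) (g : Γ) :
    dist y z ≤ dist y (g • z) := by
  by_contra! hlt
  rw [mem_ball] at hy hz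
  have hε : 0 < ε := by linarith [dist_nonneg (x := y) (y := x)]
  have hgz : g • z ∈ ball x ε := by
    rw [mem_ball]
    linarith [dist_triangle_left (g • z) x y, dist_triangle_right y z x]
  have hz' : z ∈ ball x ε := by
    rw [mem_ball]
    linarith
  exact hlt.ne (by rw [hinj hgz hz' (Quotient.sound (mem_orbit z g))])

theorem exists_section_of_orbitDist_lt [IsIsometricSMul Γ E] (x : E) {δ : ℝ} (hδ : 0 < δ) :
    ∃ s : Quotient (orbitRel Γ E) → E, s (Quotient.mk (orbitRel Γ E) x) = x ∧
      ∀ b, orbitDist Γ b (Quotient.mk (orbitRel Γ E) x) < δ →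
        Quotient.mk (orbitRel Γ E) (s b) = b ∧ dist (s b) x < δ := by
  classical
  have : Nonempty E := ⟨x⟩
  choose! f hf using fun b (hb : orbitDist Γ b (Quotient.mk (orbitRel Γ E) x) < δ) =>
    exists_dist_lt_of_orbitDist_lt hb
  refine ⟨Function.update f (Quotient.mk (orbitRel Γ E) x) x, Function.update_self .., ?_⟩
  intro b hb
  rcases eq_or_ne b (Quotient.mk (orbitRel Γ E) x) with rfl | hne
  · simpa using hδ
  · rw [Function.update_of_ne hne]
    exact hf b hb

end

/-- If a group `Γ` acts by isometries on a metric space `E` and the quotient map onto the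
orbit space (with the quotient topology) is a covering map, then it admits local isometric
sections with respect to the induced quotient (pseudo)metric `D`. -/
theorem stmt11 {E : Type*} [MetricSpace E] {Γ : Type*} [Group Γ] [MulAction Γ E]
    (hiso : ∀ g : Γ, Isometry fun x : E => g • x)
    (hcov : IsCoveringMap (Quotient.mk (MulAction.orbitRel Γ E)))
    (D : Quotient (MulAction.orbitRel Γ E) → Quotient (MulAction.orbitRel Γ E) → ℝ)
    (hD : ∀ b₁ b₂, D b₁ b₂ = sInf {r : ℝ | ∃ y₁ y₂ : E,
      Quotient.mk (MulAction.orbitRel Γ E) y₁ = b₁ ∧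
      Quotient.mk (MulAction.orbitRel Γ E) y₂ = b₂ ∧ dist y₁ y₂ = r})
    (x : E) :
    ∃ δ > (0 : ℝ), ∃ s : Quotient (MulAction.orbitRel Γ E) → E,
      s (Quotient.mk (MulAction.orbitRel Γ E) x) = x ∧
      (∀ b, D b (Quotient.mk (MulAction.orbitRel Γ E) x) < δ →
        Quotient.mk (MulAction.orbitRel Γ E) (s b) = b) ∧
      (∀ b₁ b₂, D b₁ (Quotient.mk (MulAction.orbitRel Γ E) x) < δ →
        D b₂ (Quotient.mk (MulAction.orbitRel Γ E) x) < δ →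
        dist (s b₁) (s b₂) = D b₁ b₂) := by
  have : IsIsometricSMul Γ E := ⟨hiso⟩
  obtain rfl : D = orbitDist Γ := funext₂ hD
  obtain ⟨U, hU, hinjU⟩ :=
    isLocallyInjective_iff_nhds.mp hcov.isLocalHomeomorph.isLocallyInjective x
  obtain ⟨ε, hε, hεU⟩ := Metric.mem_nhds_iff.mp hU
  obtain ⟨s, hsx, hs⟩ := exists_section_of_orbitDist_lt (Γ := Γ) x (δ := ε / 4) (by positivity)
  refine ⟨ε / 4, by positivity, s, hsx, fun b hb => (hs b hb).1, fun b₁ b₂ hb₁ hb₂ => ?_⟩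
  obtain ⟨hsb₁, hd₁⟩ := hs b₁ hb₁
  obtain ⟨hsb₂, hd₂⟩ := hs b₂ hb₂
  rw [← orbitDist_mk_mk_eq_dist (dist_le_dist_smul_of_injOn_ball (hinjU.mono hεU) hd₁ hd₂),
    hsb₁, hsb₂]
end

section
/- Model the circle as A = ℝ/2ℤ (the additive circle of period 2) with its quotient metric dist(x̄, ȳ) = min_{k ∈ ℤ} |x − y − 2k|, which has diameter 1. Let Ω be a measurable space with a probability measure μ, f : Ω → A measurable, and α > 0 with ∫ dist(f(t), 0) dμ(t) < α. For x ∈ ℝ set F(x) = ∫ dist(f(t), x̄) dμ(t), where x̄ is the class of x in A. Then: (1) if 1/2 ≤ |x| ≤ 1 then F(x) ≥ 1/4 − α; (2) if |x| ≤ 1/16 then F(x) ≤ 1/8 + 16α; (3) if α < 1/64 and 1/16 ≤ y < x ≤ 1/2 then F(y) < F(x); (4) if α < 1/64 and −1/2 ≤ x < y ≤ −1/16 then F(y) < F(x). -/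
/-!
Points `x̄` near `0` are compared with the point `0̄`, around which `f` concentrates, by the
triangle inequality; this gives (1) and (2). For (3) and (4), Markov's inequality shows that
`f` lies within `1/16` of `0̄` with probability `> 1/2`. On that event `ȳ` lies on a geodesic
from `f t` to `x̄`, so `dist (f t) x̄ - dist (f t) ȳ = dist ȳ x̄`, while elsewhere this
difference is still `≥ -dist ȳ x̄`; integrating gives `F y < F x`.
-/

open MeasureTheory Set

section IntegralDist

variable {Ω X : Type*} [MeasurableSpace Ω] {μ : Measure Ω} [PseudoMetricSpace X] {f : Ω → X}
  {a b : X}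

theorem integral_dist_le_integral_dist_add [IsProbabilityMeasure μ]
    (ha : Integrable (fun t => dist (f t) a) μ) (hb : Integrable (fun t => dist (f t) b) μ) :
    ∫ t, dist (f t) b ∂μ ≤ ∫ t, dist (f t) a ∂μ + dist a b := by
  calc ∫ t, dist (f t) b ∂μ ≤ ∫ t, (dist (f t) a + dist a b) ∂μ :=
        integral_mono hb (ha.add (integrable_const _)) fun t => dist_triangle _ _ _
    _ = ∫ t, dist (f t) a ∂μ + dist a b := by
        rw [integral_add ha (integrable_const _), integral_const, probReal_univ, one_smul]

theorem dist_sub_integral_dist_le_integral_dist [IsProbabilityMeasure μ]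
    (ha : Integrable (fun t => dist (f t) a) μ) (hb : Integrable (fun t => dist (f t) b) μ) :
    dist a b - ∫ t, dist (f t) a ∂μ ≤ ∫ t, dist (f t) b ∂μ := by
  have h : dist a b ≤ ∫ t, (dist (f t) a + dist (f t) b) ∂μ := by
    calc dist a b = ∫ _, dist a b ∂μ := by rw [integral_const, probReal_univ, one_smul]
      _ ≤ ∫ t, (dist (f t) a + dist (f t) b) ∂μ :=
        integral_mono (integrable_const _) (ha.add hb) fun t => dist_triangle_left _ _ _
  rw [integral_add ha hb] at h
  linarith

theorem integral_dist_lt_integral_dist_of_dist_eq_add [IsFiniteMeasure μ] {s : Set Ω}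
    (ha : Integrable (fun t => dist (f t) a) μ) (hb : Integrable (fun t => dist (f t) b) μ)
    (hba : 0 < dist b a) (hs : MeasurableSet s) (hμs : μ.real sᶜ < μ.real s)
    (hbetween : ∀ t ∈ s, dist (f t) a = dist (f t) b + dist b a) :
    ∫ t, dist (f t) b ∂μ < ∫ t, dist (f t) a ∂μ := by
  have hg : Integrable (fun t => dist (f t) a - dist (f t) b) μ := ha.sub hb
  have h_on : dist b a * μ.real s ≤ ∫ t in s, (dist (f t) a - dist (f t) b) ∂μ :=
    setIntegral_ge_of_const_le_real hs (measure_ne_top _ _)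
      (fun t ht => by rw [hbetween t ht]; linarith) hg.integrableOn
  have h_off : -dist b a * μ.real sᶜ ≤ ∫ t in sᶜ, (dist (f t) a - dist (f t) b) ∂μ :=
    setIntegral_ge_of_const_le_real hs.compl (measure_ne_top _ _)
      (fun t _ => by linarith [dist_triangle (f t) a b, dist_comm a b]) hg.integrableOn
  have hpos : 0 < ∫ t, (dist (f t) a - dist (f t) b) ∂μ := by
    rw [← integral_add_compl hs hg]
    nlinarith
  rw [integral_sub ha hb] at hpos
  linarith

theorem measureReal_compl_lt_measureReal_setOf_dist_lt [IsProbabilityMeasure μ] {r : ℝ}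
    (ha : Integrable (fun t => dist (f t) a) μ) (h : 2 * ∫ t, dist (f t) a ∂μ < r) :
    μ.real {t | dist (f t) a < r}ᶜ < μ.real {t | dist (f t) a < r} := by
  have hs : NullMeasurableSet {t | dist (f t) a < r} μ :=
    ha.aemeasurable.nullMeasurable measurableSet_Iio
  have hsc : {t | dist (f t) a < r}ᶜ = {t | r ≤ dist (f t) a} := by ext; simp
  have hmarkov := mul_meas_ge_le_integral_of_nonneg (ae_of_all _ fun t => dist_nonneg) ha r
  have hr : 0 < r := by
    have : 0 ≤ ∫ t, dist (f t) a ∂μ := integral_nonneg fun _ => dist_nonneg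
    linarith
  rw [← hsc, probReal_compl_eq_one_sub₀ hs] at hmarkov
  rw [probReal_compl_eq_one_sub₀ hs]
  nlinarith

end IntegralDist

namespace AddCircle

variable {p : ℝ}

theorem integrable_dist {Ω : Type*} [MeasurableSpace Ω] {μ : Measure Ω} [IsFiniteMeasure μ]
    (hp : p ≠ 0) {f : Ω → AddCircle p} (hf : Measurable f) (c : AddCircle p) :
    Integrable (fun t => dist (f t) c) μ :=
  (integrable_const (|p| / 2)).mono' (hf.dist measurable_const).aestronglyMeasurable
    (ae_of_all _ fun t => by
      rw [Real.norm_of_nonneg dist_nonneg, dist_eq_norm]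
      exact norm_le_half_period p hp)

theorem dist_coe_coe_of_abs_sub_le (hp : p ≠ 0) {x y : ℝ} (h : |x - y| ≤ |p| / 2) :
    dist (x : AddCircle p) y = |x - y| := by
  rw [dist_eq_norm, ← coe_sub, norm_coe_eq_abs_iff p hp]
  exact h

theorem exists_coe_eq_abs_eq_norm (z : AddCircle p) :
    ∃ u : ℝ, (u : AddCircle p) = z ∧ |u| = ‖z‖ := by
  induction z using QuotientAddGroup.induction_on with
  | H v =>
    refine ⟨v - round (p⁻¹ * v) * p, ?_, (norm_eq p).symm⟩
    rw [coe_sub, sub_eq_self, coe_eq_zero_iff]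
    exact ⟨round (p⁻¹ * v), zsmul_eq_mul _ _⟩

theorem dist_coe_eq_add_of_mem_uIcc (hp : p ≠ 0) {u x y : ℝ} (hy : y ∈ uIcc u x)
    (hux : |u - x| ≤ |p| / 2) :
    dist (u : AddCircle p) x = dist (u : AddCircle p) y + dist (y : AddCircle p) x := by
  have hxu : |x - u| ≤ |p| / 2 := by rwa [abs_sub_comm]
  have huy : |u - y| ≤ |p| / 2 := by
    rw [abs_sub_comm]; exact (abs_sub_left_of_mem_uIcc hy).trans hxu
  have hyx : |y - x| ≤ |p| / 2 := by
    rw [abs_sub_comm]; exact (abs_sub_right_of_mem_uIcc hy).trans hxu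
  rw [dist_coe_coe_of_abs_sub_le hp hux, dist_coe_coe_of_abs_sub_le hp huy,
    dist_coe_coe_of_abs_sub_le hp hyx, ← Real.dist_eq, ← Real.dist_eq, ← Real.dist_eq,
    dist_add_dist_of_mem_segment (by rwa [segment_eq_uIcc])]

theorem dist_eq_add_of_norm_le (hp : p ≠ 0) {z : AddCircle p} {r x y : ℝ} (hz : ‖z‖ ≤ r)
    (hy : y ∈ uIcc 0 x) (hry : r ≤ |y|) (hx : r + |x| ≤ |p| / 2) :
    dist z x = dist z y + dist (y : AddCircle p) x := by
  obtain ⟨u, rfl, hu⟩ := exists_coe_eq_abs_eq_norm z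
  rw [← hu] at hz
  refine dist_coe_eq_add_of_mem_uIcc hp ?_ ((abs_sub _ _).trans (by linarith))
  rcases le_total 0 x with hx0 | hx0
  · rw [uIcc_of_le hx0] at hy
    rw [abs_of_nonneg hy.1] at hry
    exact Icc_subset_uIcc ⟨by linarith [le_abs_self u], hy.2⟩
  · rw [uIcc_of_ge hx0] at hy
    rw [abs_of_nonpos hy.2] at hry
    exact Icc_subset_uIcc' ⟨hy.1, by linarith [neg_abs_le u]⟩

theorem integral_dist_coe_lt {Ω : Type*} [MeasurableSpace Ω] {μ : Measure Ω}
    [IsProbabilityMeasure μ] (hp : p ≠ 0) {f : Ω → AddCircle p} (hf : Measurable f)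
    {r x y : ℝ} (hconc : 2 * ∫ t, dist (f t) 0 ∂μ < r) (hyx : y ≠ x) (hy : y ∈ uIcc 0 x)
    (hry : r ≤ |y|) (hx : r + |x| ≤ |p| / 2) :
    ∫ t, dist (f t) y ∂μ < ∫ t, dist (f t) x ∂μ := by
  have hint := integrable_dist (μ := μ) hp hf
  have hr : 0 ≤ r := by
    have : 0 ≤ ∫ t, dist (f t) 0 ∂μ := integral_nonneg fun _ => dist_nonneg
    linarith
  have hxy : |x - y| ≤ |x| := by simpa using abs_sub_right_of_mem_uIcc hy
  have hdist : 0 < dist (y : AddCircle p) x := by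
    rw [dist_coe_coe_of_abs_sub_le hp (by rw [abs_sub_comm]; linarith)]
    exact abs_pos.mpr (sub_ne_zero.mpr hyx)
  refine integral_dist_lt_integral_dist_of_dist_eq_add (hint _) (hint _) hdist
    (measurableSet_lt (hf.dist measurable_const) measurable_const)
    (measureReal_compl_lt_measureReal_setOf_dist_lt (hint 0) hconc)
    fun t ht => dist_eq_add_of_norm_le hp ?_ hy hry hx
  rw [← dist_zero_right]
  exact (show dist (f t) 0 < r from ht).le

end AddCircle

theorem stmt12_general {Ω : Type*} [MeasurableSpace Ω] (μ : Measure Ω) [IsProbabilityMeasure μ]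
    (f : Ω → AddCircle (2 : ℝ)) (hf : Measurable f)
    (α : ℝ)
    (hconc : ∫ t, dist (f t) (0 : AddCircle (2 : ℝ)) ∂μ < α)
    (F : ℝ → ℝ)
    (hF : ∀ x : ℝ, F x = ∫ t, dist (f t) ((x : AddCircle (2 : ℝ))) ∂μ) :
    (∀ x : ℝ, 1 / 2 ≤ |x| → |x| ≤ 1 → 1 / 4 - α ≤ F x) ∧
    (∀ x : ℝ, |x| ≤ 1 / 16 → F x ≤ 1 / 8 + 16 * α) ∧
    (α < 1 / 64 → ∀ x y : ℝ, 1 / 16 ≤ y → y < x → x ≤ 1 / 2 → F y < F x) ∧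
    (α < 1 / 64 → ∀ x y : ℝ, -(1 / 2) ≤ x → x < y → y ≤ -(1 / 16) → F y < F x) := by
  have hp : (2 : ℝ) ≠ 0 := two_ne_zero
  have hint := AddCircle.integrable_dist (μ := μ) hp hf
  have hdist0 (x : ℝ) (hx : |x| ≤ 1) :
      dist (0 : AddCircle (2 : ℝ)) (x : AddCircle (2 : ℝ)) = |x| := by
    simpa using AddCircle.dist_coe_coe_of_abs_sub_le hp (x := 0) (y := x) (by simpa using hx)
  have hconc0 : 0 ≤ ∫ t, dist (f t) 0 ∂μ := integral_nonneg fun _ => dist_nonneg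
  refine ⟨fun x hx₁ hx₂ => ?_, fun x hx => ?_, fun hα x y hy hyx hx => ?_,
    fun hα x y hx hxy hy => ?_⟩
  · have := dist_sub_integral_dist_le_integral_dist (hint 0) (hint x)
    rw [hdist0 x hx₂] at this
    rw [hF]; linarith
  · have := integral_dist_le_integral_dist_add (hint 0) (hint x)
    rw [hdist0 x (by linarith)] at this
    rw [hF]; linarith
  · rw [hF, hF]
    refine AddCircle.integral_dist_coe_lt hp hf (r := 1 / 16) (by linarith) hyx.ne
      (Icc_subset_uIcc ⟨by linarith, hyx.le⟩) ?_ ?_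
    · rwa [abs_of_pos (by linarith)]
    · rw [abs_of_pos (by linarith)]; norm_num; linarith
  · rw [hF, hF]
    refine AddCircle.integral_dist_coe_lt hp hf (r := 1 / 16) (by linarith) hxy.ne'
      (Icc_subset_uIcc' ⟨hxy.le, by linarith⟩) ?_ ?_
    · rw [abs_of_neg (by linarith)]; linarith
    · rw [abs_of_neg (by linarith)]; norm_num; linarith

/-- The key monotonicity lemma for the averaged distance function
`F x = ∫ dist (f t) x̄ dμ` on the circle `ℝ/2ℤ`, for a random variable `f`
concentrated in measure near `0`. -/
theorem stmt12 {Ω : Type*} [MeasurableSpace Ω] (μ : Measure Ω) [IsProbabilityMeasure μ]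
    (f : Ω → AddCircle (2 : ℝ)) (hf : Measurable f)
    (α : ℝ) (hα : 0 < α)
    (hconc : ∫ t, dist (f t) (0 : AddCircle (2 : ℝ)) ∂μ < α)
    (F : ℝ → ℝ)
    (hF : ∀ x : ℝ, F x = ∫ t, dist (f t) ((x : AddCircle (2 : ℝ))) ∂μ) :
    (∀ x : ℝ, 1 / 2 ≤ |x| → |x| ≤ 1 → 1 / 4 - α ≤ F x) ∧
    (∀ x : ℝ, |x| ≤ 1 / 16 → F x ≤ 1 / 8 + 16 * α) ∧
    (α < 1 / 64 → ∀ x y : ℝ, 1 / 16 ≤ y → y < x → x ≤ 1 / 2 → F y < F x) ∧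
    (α < 1 / 64 → ∀ x y : ℝ, -(1 / 2) ≤ x → x < y → y ≤ -(1 / 16) → F y < F x) :=
  stmt12_general μ f hf α hconc F hF
end

section
/- Let μ be Lebesgue measure on the interval [0,1]. The map from L¹(μ; ℝ) to L¹(μ; ℝ) which sends (the equivalence class of) a function g to (the equivalence class of) the indicator function of the set {t : g(t) > 0} is Borel measurable, with respect to the Borel σ-algebras of the L¹ norm topology. -/
/-!
Composition with the Lipschitz ramp `x ↦ max (min (n x) 1) 0` is a continuous self-map of `Lᵖ`,
and by dominated convergence (the ramps are dominated by `1_{g > 0}` itself) these maps converge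
pointwise on `Lᵖ` to `g ↦ 1_{g > 0}` when `p < ∞`. A pointwise limit of continuous maps into a
metrizable space is Borel measurable.
-/

open MeasureTheory Filter Topology

noncomputable def ramp (n : ℕ) (x : ℝ) : ℝ := max (min (n * x) 1) 0

theorem ramp_zero (n : ℕ) : ramp n 0 = 0 := by simp [ramp]

theorem lipschitzWith_ramp (n : ℕ) : LipschitzWith n (ramp n) := by
  have : LipschitzWith n (fun x : ℝ ↦ (n : ℝ) * x) :=
    LipschitzWith.of_dist_le_mul fun x y ↦ by simp [Real.dist_eq, ← mul_sub, abs_mul]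
  exact (this.min_const 1).max_const 0

theorem ramp_of_nonpos {n : ℕ} {x : ℝ} (hx : x ≤ 0) : ramp n x = 0 := by
  have : (n : ℝ) * x ≤ 0 := mul_nonpos_of_nonneg_of_nonpos n.cast_nonneg hx
  simp [ramp, this, this.trans zero_le_one]

theorem norm_ramp_le_indicator (n : ℕ) (x : ℝ) :
    ‖ramp n x‖ ≤ {t : ℝ | 0 < t}.indicator 1 x := by
  by_cases hx : 0 < x
  · simp [hx, ramp, abs_of_nonneg]
  · simp [ramp_of_nonpos (not_lt.1 hx), hx]

theorem tendsto_ramp (x : ℝ) :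
    Tendsto (fun n ↦ ramp n x) atTop (𝓝 ({t : ℝ | 0 < t}.indicator 1 x)) := by
  by_cases hx : 0 < x
  · have : ∀ᶠ n : ℕ in atTop, 1 ≤ (n : ℝ) * x :=
      (tendsto_natCast_atTop_atTop.atTop_mul_const hx).eventually_ge_atTop 1
    refine tendsto_const_nhds.congr' (this.mono fun n hn ↦ ?_)
    simp [ramp, hx, hn]
  · simp [ramp_of_nonpos (not_lt.1 hx), hx]

namespace MeasureTheory

variable {α : Type*} [MeasurableSpace α] {μ : Measure α} {p : ENNReal}

theorem tendsto_eLpNorm_sub_of_dominated_convergence {E : Type*} [NormedAddCommGroup E]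
    {F : ℕ → α → E} {f : α → E} (bound : α → ℝ) (hp : p ≠ ⊤)
    (hF : ∀ n, AEStronglyMeasurable (F n) μ) (hbound : MemLp bound p μ)
    (h_bound : ∀ n, ∀ᵐ a ∂μ, ‖F n a‖ ≤ bound a)
    (h_lim : ∀ᵐ a ∂μ, Tendsto (fun n ↦ F n a) atTop (𝓝 (f a))) :
    Tendsto (fun n ↦ eLpNorm (F n - f) p μ) atTop (𝓝 0) := by
  rcases eq_or_ne p 0 with rfl | hp0
  · simp
  have hq : 0 < p.toReal := ENNReal.toReal_pos hp0 hp
  have hf : AEStronglyMeasurable f μ := aestronglyMeasurable_of_tendsto_ae atTop hF h_lim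
  have hf_bound : ∀ᵐ a ∂μ, ‖f a‖ ≤ bound a := by
    filter_upwards [h_lim, ae_all_iff.2 h_bound] with a ha hb
    exact le_of_tendsto' ha.norm hb
  have h_lintegral :
      Tendsto (fun n ↦ ∫⁻ a, ‖F n a - f a‖ₑ ^ p.toReal ∂μ) atTop (𝓝 0) := by
    have h_two_bound : ∫⁻ a, ‖(2 : ℝ) * bound a‖ₑ ^ p.toReal ∂μ ≠ ⊤ :=
      (lintegral_rpow_enorm_lt_top_of_eLpNorm_lt_top hp0 hp
        (hbound.const_mul 2).eLpNorm_lt_top).ne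
    have := tendsto_lintegral_of_dominated_convergence' (f := 0)
      (F := fun n a ↦ ‖F n a - f a‖ₑ ^ p.toReal) _
      (fun n ↦ ((hF n).sub hf).enorm.pow_const _) (fun n ↦ ?_) h_two_bound ?_
    · simpa using this
    · filter_upwards [h_bound n, hf_bound] with a hFa hfa
      gcongr
      rw [enorm_le_iff_norm_le]
      calc ‖F n a - f a‖ ≤ ‖F n a‖ + ‖f a‖ := norm_sub_le _ _
        _ ≤ 2 * bound a := by linarith
        _ ≤ ‖2 * bound a‖ := Real.le_norm_self _
    · filter_upwards [h_lim] with a ha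
      have h0 : Tendsto (fun n ↦ ‖F n a - f a‖ₑ) atTop (𝓝 0) := by
        simpa using (tendsto_sub_nhds_zero_iff.2 ha).enorm
      have := (ENNReal.continuous_rpow_const (y := p.toReal)).tendsto 0 |>.comp h0
      rwa [ENNReal.zero_rpow_of_pos hq] at this
  rw [← ENNReal.zero_rpow_of_pos (one_div_pos.2 hq)]
  simp_rw [eLpNorm_eq_lintegral_rpow_enorm_toReal hp0 hp, Pi.sub_apply]
  exact (ENNReal.continuous_rpow_const.tendsto 0).comp h_lintegral

variable [Fact (1 ≤ p)]

theorem tendsto_compLp_ramp (hp : p ≠ ⊤) (g h : Lp ℝ p μ)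
    (hh : h =ᵐ[μ] {t | 0 < g t}.indicator 1) :
    Tendsto (fun n ↦ (lipschitzWith_ramp n).compLp (ramp_zero n) g) atTop (𝓝 h) := by
  rw [Lp.tendsto_Lp_iff_tendsto_eLpNorm']
  have hlim := tendsto_eLpNorm_sub_of_dominated_convergence (F := fun n ↦ ramp n ∘ g)
    (f := {t | 0 < g t}.indicator 1) _ hp
    (fun n ↦ (lipschitzWith_ramp n).continuous.comp_aestronglyMeasurable
      (Lp.aestronglyMeasurable g))
    ((Lp.memLp h).ae_eq hh) (fun n ↦ ae_of_all _ fun a ↦ norm_ramp_le_indicator n (g a))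
    (ae_of_all _ fun a ↦ tendsto_ramp (g a))
  exact hlim.congr fun n ↦
    eLpNorm_congr_ae (((lipschitzWith_ramp n).coeFn_compLp _ g).sub hh).symm

theorem measurable_of_ae_eq_indicator_pos (hp : p ≠ ⊤) (T : Lp ℝ p μ → Lp ℝ p μ)
    (hT : ∀ g, T g =ᵐ[μ] {t | 0 < g t}.indicator 1) :
    @Measurable _ _ (borel _) (borel _) T := by
  borelize ↥(Lp ℝ p μ)
  exact measurable_of_tendsto_metrizable
    (fun n ↦ ((lipschitzWith_ramp n).continuous_compLp (ramp_zero n)).measurable)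
    (tendsto_pi_nhds.2 fun g ↦ tendsto_compLp_ramp hp g (T g) (hT g))

end MeasureTheory

/-- The map `L¹([0,1];ℝ) → L¹([0,1];ℝ)` sending (the class of) `g` to (the class of) the
indicator function of `{t : g t > 0}` is Borel measurable for the L¹ norm topology. -/
theorem stmt14
    (T : Lp ℝ 1 (volume.restrict (Set.Icc (0 : ℝ) 1)) →
      Lp ℝ 1 (volume.restrict (Set.Icc (0 : ℝ) 1)))
    (hT : ∀ g : Lp ℝ 1 (volume.restrict (Set.Icc (0 : ℝ) 1)),
      (T g : ℝ → ℝ) =ᵐ[volume.restrict (Set.Icc (0 : ℝ) 1)]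
        Set.indicator {t : ℝ | 0 < (g : ℝ → ℝ) t} 1) :
    @Measurable _ _ (borel _) (borel _) T :=
  measurable_of_ae_eq_indicator_pos ENNReal.one_ne_top T hT
end

section
/- Let λ denote Lebesgue measure on [0,1]. Let A ⊆ [0,1]² be a set such that (i) for every x ∈ [0,1] the section A_x = { y ∈ [0,1] : (x,y) ∈ A } is a Borel set, and (ii) the map x ↦ 1_{A_x}, regarded as a map from [0,1] into L¹(λ; ℝ), is Borel measurable. Then there exists a Borel measurable set B ⊆ [0,1]² such that λ(A_x Δ B_x) = 0 for λ-almost every x ∈ [0,1], where B_x = { y : (x,y) ∈ B } and Δ denotes symmetric difference. -/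
/-!
Average the section functions over shrinking balls. For fixed `x`, `y ↦ ∫_{B(y,r)} F x` is
continuous (a difference of primitives of an integrable function), and for fixed `y` it is a
continuous functional of `F x`, hence Borel in `x`; such a Carathéodory function is jointly
measurable. So the set `B` of points `(x, y)` at which the ball averages tend to `1` is Borel, and
by the Lebesgue differentiation theorem its sections agree a.e. with those of `A`, for every `x`.
-/

open MeasureTheory Filter Set Metric
open scoped Topology

section ClosedBallIntegral

variable {E : Type*} [NormedAddCommGroup E] [NormedSpace ℝ E] {μ : Measure ℝ}
  [NullSingletonClass μ]

theorem MeasureTheory.Integrable.continuous_setIntegral_closedBall {f : ℝ → E}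
    (hf : Integrable f μ) {r : ℝ} (hr : 0 ≤ r) :
    Continuous fun y => ∫ t in closedBall y r, f t ∂μ := by
  have hprim := hf.continuous_primitive 0
  have hball : (fun y => ∫ t in closedBall y r, f t ∂μ) =
      fun y => (∫ t in (0 : ℝ)..(y + r), f t ∂μ) - ∫ t in (0 : ℝ)..(y - r), f t ∂μ := by
    funext y
    rw [intervalIntegral.integral_interval_sub_left hf.intervalIntegrable hf.intervalIntegrable,
      intervalIntegral.integral_of_le (by linarith), Real.closedBall_eq_Icc,
      integral_Icc_eq_integral_Ioc]
  rw [hball]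
  exact (hprim.comp (continuous_id.add continuous_const)).sub
    (hprim.comp (continuous_id.sub continuous_const))

variable [MeasurableSpace E] [BorelSpace E]

theorem measurable_setIntegral_closedBall_of_measurable_Lp {α : Type*} [MeasurableSpace α]
    {F : α → Lp E 1 μ} (hF : @Measurable α _ _ (borel _) F) {r : ℝ} (hr : 0 ≤ r) :
    Measurable fun p : α × ℝ => ∫ t in closedBall p.2 r, (F p.1 : ℝ → E) t ∂μ := by
  let : MeasurableSpace (Lp E 1 μ) := borel _
  have : BorelSpace (Lp E 1 μ) := ⟨rfl⟩
  have hcont : ∀ x, Continuous fun y => ∫ t in closedBall y r, (F x : ℝ → E) t ∂μ :=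
    fun x => (L1.integrable_coeFn (F x)).continuous_setIntegral_closedBall hr
  have hmeas : ∀ y, Measurable fun x => ∫ t in closedBall y r, (F x : ℝ → E) t ∂μ :=
    fun y => (continuous_setIntegral (closedBall y r)).measurable.comp hF
  exact (measurable_uncurry_of_continuous_of_measurable hcont hmeas).comp measurable_swap

end ClosedBallIntegral

section BallAverage

variable {α : Type*} {s : Set ℝ}

noncomputable def ballAverage (F : α → Lp ℝ 1 (volume.restrict s)) (n : ℕ) (p : α × ℝ) : ℝ :=
  ⨍ t in closedBall p.2 (1 / (n + 1)), s.indicator (F p.1) t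

theorem measurable_ballAverage [MeasurableSpace α] (hs : MeasurableSet s)
    {F : α → Lp ℝ 1 (volume.restrict s)} (hF : @Measurable α _ _ (borel _) F) (n : ℕ) :
    Measurable (ballAverage F n) := by
  have hr : (0 : ℝ) ≤ 1 / (n + 1) := by positivity
  have heq : ballAverage F n = fun p => (2 * (1 / (n + 1) : ℝ))⁻¹ *
      ∫ t in closedBall p.2 (1 / (n + 1) : ℝ), (F p.1 : ℝ → ℝ) t ∂volume.restrict s := by
    funext p
    rw [ballAverage, setAverage_eq, setIntegral_indicator hs, Real.volume_real_closedBall hr,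
      Measure.restrict_restrict measurableSet_closedBall, smul_eq_mul]
  rw [heq]
  exact (measurable_setIntegral_closedBall_of_measurable_Lp hF hr).const_mul _

theorem ae_tendsto_ballAverage (hs : MeasurableSet s) (F : α → Lp ℝ 1 (volume.restrict s))
    (x : α) :
    ∀ᵐ y, Tendsto (fun n => ballAverage F n (x, y)) atTop (𝓝 (s.indicator (F x) y)) := by
  have hint : Integrable (s.indicator (F x)) :=
    IntegrableOn.integrable_indicator (L1.integrable_coeFn (F x)) hs
  have hradius : Tendsto (fun n : ℕ => 1 / ((n : ℝ) + 1)) atTop (𝓝[>] 0) :=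
    tendsto_nhdsWithin_of_tendsto_nhds_of_eventually_within _
      tendsto_one_div_add_atTop_nhds_zero_nat
      (Eventually.of_forall fun n => mem_Ioi.2 (by positivity))
  filter_upwards [IsUnifLocDoublingMeasure.ae_tendsto_average (μ := volume)
    hint.locallyIntegrable 1] with y hy
  exact hy (fun _ => y) _ hradius
    (Eventually.of_forall fun n => mem_closedBall_self (by positivity))

end BallAverage

theorem MeasureTheory.indicator_ae_eq_of_ae_restrict_eq {α β : Type*} [MeasurableSpace α]
    [Zero β] {μ : Measure α} {s : Set α} {f g : α → β} (hs : MeasurableSet s)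
    (hg : Function.support g ⊆ s) (h : f =ᵐ[μ.restrict s] g) : s.indicator f =ᵐ[μ] g := by
  rw [← indicator_eq_self.2 hg]
  exact (ae_eq_restrict_iff_indicator_ae_eq hs).1 h

theorem tendsto_one_iff_mem_of_tendsto_indicator {u : ℕ → ℝ} {S : Set ℝ} {y : ℝ}
    (hu : Tendsto u atTop (𝓝 (S.indicator 1 y))) : Tendsto u atTop (𝓝 1) ↔ y ∈ S := by
  by_cases hy : y ∈ S
  · simpa [hy] using hu
  · simp only [hy, iff_false]
    rw [indicator_of_notMem hy] at hu
    exact fun h => zero_ne_one (tendsto_nhds_unique hu h)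

theorem stmt15_general (A : Set (ℝ × ℝ))
    (hAsub : A ⊆ Set.Icc (0 : ℝ) 1 ×ˢ Set.Icc (0 : ℝ) 1)
    (F : ℝ → Lp ℝ 1 (volume.restrict (Set.Icc (0 : ℝ) 1)))
    (hFval : ∀ x : ℝ, (F x : ℝ → ℝ) =ᵐ[volume.restrict (Set.Icc (0 : ℝ) 1)]
      Set.indicator {y : ℝ | (x, y) ∈ A} 1)
    (hFmeas : @Measurable ℝ _ _ (borel _) F) :
    ∃ B : Set (ℝ × ℝ), MeasurableSet B ∧
      ∀ᵐ x ∂(volume.restrict (Set.Icc (0 : ℝ) 1)),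
        volume (symmDiff {y : ℝ | (x, y) ∈ A} {y : ℝ | (x, y) ∈ B}) = 0 := by
  refine ⟨{p | Tendsto (fun n => ballAverage F n p) atTop (𝓝 1)},
    measurableSet_tendsto _ (measurable_ballAverage measurableSet_Icc hFmeas),
    ae_of_all _ fun x => ?_⟩
  have hsupp : Function.support ({y | (x, y) ∈ A}.indicator (1 : ℝ → ℝ)) ⊆ Icc 0 1 :=
    Set.support_indicator_subset.trans fun y hy => (hAsub hy).2
  rw [measure_symmDiff_eq_zero_iff, eventuallyEq_set]
  filter_upwards [ae_tendsto_ballAverage measurableSet_Icc F x,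
    indicator_ae_eq_of_ae_restrict_eq measurableSet_Icc hsupp (hFval x)] with y hlim hy
  rw [hy] at hlim
  exact (tendsto_one_iff_mem_of_tendsto_indicator hlim).symm

/-- If `A ⊆ [0,1]²` has Borel sections and the section map `x ↦ 1_{A_x}` is a Borel map
into `L¹([0,1];ℝ)`, then there is a Borel set `B ⊆ [0,1]²` whose sections agree with those
of `A` up to null sets, for almost every `x`. -/
theorem stmt15 (A : Set (ℝ × ℝ))
    (hAsub : A ⊆ Set.Icc (0 : ℝ) 1 ×ˢ Set.Icc (0 : ℝ) 1)
    (hsec : ∀ x : ℝ, MeasurableSet {y : ℝ | (x, y) ∈ A})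
    (F : ℝ → Lp ℝ 1 (volume.restrict (Set.Icc (0 : ℝ) 1)))
    (hFval : ∀ x : ℝ, (F x : ℝ → ℝ) =ᵐ[volume.restrict (Set.Icc (0 : ℝ) 1)]
      Set.indicator {y : ℝ | (x, y) ∈ A} 1)
    (hFmeas : @Measurable ℝ _ _ (borel _) F) :
    ∃ B : Set (ℝ × ℝ), MeasurableSet B ∧
      ∀ᵐ x ∂(volume.restrict (Set.Icc (0 : ℝ) 1)),
        volume (symmDiff {y : ℝ | (x, y) ∈ A} {y : ℝ | (x, y) ∈ B}) = 0 :=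
  stmt15_general A hAsub F hFval hFmeas
end

section
/- Let λ denote Lebesgue measure on [0,1] and fix m > 0. Let F : [0,1] → L¹(λ; ℝ) be a Borel measurable map such that for every x ∈ [0,1], the function F(x) satisfies 0 ≤ F(x)(y) ≤ m for λ-almost every y. Then there exists a jointly measurable function f : [0,1] × [0,1] → ℝ with values in [0, m] such that for λ-almost every x ∈ [0,1], the function y ↦ f(x,y) is λ-almost everywhere equal to (a representative of) F(x). -/
/-!
The primitive `(x, t) ↦ ∫₀ᵗ F x` is continuous in `t` and measurable in `x`, hence jointly
measurable. By Lebesgue's differentiation theorem its `t`-derivative equals `F x` almost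
everywhere, and that derivative can be computed as a limsup of difference quotients along the
steps `1 / (n + 1)`, a jointly measurable expression. Clamping to `[0, m]` changes nothing where
`F x` already takes values in `[0, m]`.
-/

open MeasureTheory Filter Topology Set

/-- A `limsup` rather than a limit, so that it is defined and measurable everywhere. -/
noncomputable def seqUpperDeriv (g : ℝ → ℝ) (y : ℝ) : ℝ :=
  limsup (fun n : ℕ => (n + 1 : ℝ) * (g (y + 1 / (n + 1)) - g y)) atTop

theorem HasDerivAt.seqUpperDeriv_eq {g : ℝ → ℝ} {g' y : ℝ} (h : HasDerivAt g g' y) :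
    seqUpperDeriv g y = g' := by
  have hsteps : Tendsto (fun n : ℕ => 1 / ((n : ℝ) + 1)) atTop (𝓝[>] 0) :=
    tendsto_nhdsWithin_of_tendsto_nhds_of_eventually_within _
      tendsto_one_div_add_atTop_nhds_zero_nat
      (Eventually.of_forall fun n => mem_Ioi.2 (by positivity))
  refine ((h.tendsto_slope_zero_right.comp hsteps).congr fun n => ?_).limsup_eq
  simp only [Function.comp_apply, one_div, inv_inv, smul_eq_mul]

variable {X : Type*} [MeasurableSpace X]

theorem measurable_seqUpperDeriv_uncurry {P : X → ℝ → ℝ} (hcont : ∀ x, Continuous (P x))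
    (hmeas : ∀ t, Measurable fun x => P x t) :
    Measurable fun z : X × ℝ => seqUpperDeriv (P z.1) z.2 := by
  have hP : Measurable fun z : X × ℝ => P z.1 z.2 :=
    (measurable_uncurry_of_continuous_of_measurable (u := fun t x => P x t) hcont hmeas).comp
      measurable_swap
  refine Measurable.limsup fun n => measurable_const.mul ?_
  exact (hP.comp (measurable_fst.prodMk (measurable_snd.add_const _))).sub hP

theorem exists_measurable_uncurry_ae_eq_of_measurable_primitive {F : X → ℝ → ℝ}
    (hint : ∀ x, LocallyIntegrable (F x)) (hprim : ∀ t, Measurable fun x => ∫ y in 0..t, F x y) :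
    ∃ f : X × ℝ → ℝ, Measurable f ∧ ∀ x, (fun y => f (x, y)) =ᵐ[volume] F x := by
  have hcont : ∀ x, Continuous fun t => ∫ y in 0..t, F x y := fun x =>
    intervalIntegral.continuous_primitive (fun a b =>
      ((hint x).integrableOn_isCompact isCompact_uIcc).intervalIntegrable) 0
  refine ⟨_, measurable_seqUpperDeriv_uncurry hcont hprim, fun x => ?_⟩
  filter_upwards [LocallyIntegrable.ae_hasDerivAt_integral (hint x)] with y hy
  exact (hy 0).seqUpperDeriv_eq

theorem intervalIntegral_indicator_eq_restrict {μ : Measure ℝ} {s : Set ℝ} (hs : MeasurableSet s)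
    (g : ℝ → ℝ) (a b : ℝ) :
    ∫ y in a..b, s.indicator g y ∂μ = ∫ y in a..b, g y ∂(μ.restrict s) := by
  simp only [intervalIntegral, integral_indicator hs, Measure.restrict_comm hs]

theorem continuous_intervalIntegral_L1 (μ : Measure ℝ) (a b : ℝ) :
    Continuous fun g : Lp ℝ 1 μ => ∫ y in a..b, g y ∂μ :=
  (continuous_setIntegral _).sub (continuous_setIntegral _)

theorem exists_measurable_uncurry_ae_eq_L1 {s : Set ℝ} (hs : MeasurableSet s)
    [MeasurableSpace (Lp ℝ 1 (volume.restrict s))] [BorelSpace (Lp ℝ 1 (volume.restrict s))]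
    {F : X → Lp ℝ 1 (volume.restrict s)} (hF : Measurable F) :
    ∃ f : X × ℝ → ℝ, Measurable f ∧ ∀ x, (fun y => f (x, y)) =ᵐ[volume.restrict s] F x := by
  have hint : ∀ x, LocallyIntegrable (s.indicator (F x)) :=
    fun x => (IntegrableOn.integrable_indicator (L1.integrable_coeFn (F x)) hs).locallyIntegrable
  have hprim : ∀ t, Measurable fun x => ∫ y in 0..t, s.indicator (F x) y := by
    intro t
    simp only [intervalIntegral_indicator_eq_restrict hs]
    exact (continuous_intervalIntegral_L1 _ 0 t).measurable.comp hF
  obtain ⟨f, hf, hfF⟩ := exists_measurable_uncurry_ae_eq_of_measurable_primitive hint hprim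
  refine ⟨f, hf, fun x => ?_⟩
  filter_upwards [ae_restrict_of_ae (hfF x), ae_restrict_mem hs] with y hy hys
  rw [hy, indicator_of_mem hys]

/-- Surjectivity of the exponential map `L(Ω×Ω,[0,m]) → L(Ω,L(Ω,[0,m]))`: a Borel map
`F : [0,1] → L¹([0,1];ℝ)` taking values a.e. in `[0,m]` arises from a jointly measurable
function `f : [0,1]² → [0,m]` by taking sections. -/
theorem stmt16 (m : ℝ) (hm : 0 < m)
    (F : ℝ → Lp ℝ 1 (volume.restrict (Set.Icc (0 : ℝ) 1)))
    (hFmeas : @Measurable ℝ _ _ (borel _) F)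
    (hFbd : ∀ x ∈ Set.Icc (0 : ℝ) 1,
      ∀ᵐ y ∂(volume.restrict (Set.Icc (0 : ℝ) 1)), (F x : ℝ → ℝ) y ∈ Set.Icc 0 m) :
    ∃ f : ℝ × ℝ → ℝ, Measurable f ∧ (∀ z, f z ∈ Set.Icc 0 m) ∧
      ∀ᵐ x ∂(volume.restrict (Set.Icc (0 : ℝ) 1)),
        (fun y => f (x, y)) =ᵐ[volume.restrict (Set.Icc (0 : ℝ) 1)] (F x : ℝ → ℝ) := by
  let _ : MeasurableSpace (Lp ℝ 1 (volume.restrict (Icc (0 : ℝ) 1))) := borel _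
  have _ : BorelSpace (Lp ℝ 1 (volume.restrict (Icc (0 : ℝ) 1))) := ⟨rfl⟩
  obtain ⟨f, hf, hfF⟩ := exists_measurable_uncurry_ae_eq_L1 measurableSet_Icc hFmeas
  refine ⟨fun z => projIcc 0 m hm.le (f z),
    (continuous_subtype_val.comp continuous_projIcc).measurable.comp hf,
    fun z => (projIcc 0 m hm.le (f z)).2, ?_⟩
  filter_upwards [ae_restrict_mem measurableSet_Icc] with x hx
  filter_upwards [hfF x, hFbd x hx] with y hfy hy
  simp only [hfy, projIcc_of_mem _ hy]
end

section
/- Let μ be Lebesgue measure on [0,1] and fix n ∈ ℕ. The subset of L¹(μ; ℝ) consisting of all equivalence classes of indicator functions of sets of the form ⋃_{i=1}^n [a_i, a_i + e_i], where a_i, e_i ∈ [0,1] and a_i + e_i ≤ 1 for every i, is a compact subset of L¹(μ; ℝ) (for the L¹ norm topology). -/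
/-!
Parametrise a union of `n` intervals by its endpoints. The measure of the symmetric difference of
two such unions is at most the total displacement of the endpoints, so the indicator map from
endpoints to `L¹` is continuous; the set in question is the image under this map of a compact set
of parameters.
-/

open MeasureTheory Set Filter Topology
open scoped ENNReal symmDiff

lemma Set.Icc_symmDiff_Icc_subset {α : Type*} [LinearOrder α] (a b a' b' : α) :
    Icc a b ∆ Icc a' b' ⊆ uIcc a a' ∪ uIcc b b' := by
  intro x
  simp only [mem_symmDiff, mem_Icc, mem_union, mem_uIcc]
  grind

lemma Real.volume_Icc_symmDiff_Icc_le (a b a' b' : ℝ) :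
    volume (Icc a b ∆ Icc a' b') ≤ edist a a' + edist b b' :=
  calc volume (Icc a b ∆ Icc a' b') ≤ volume (uIcc a a' ∪ uIcc b b') :=
        measure_mono (Icc_symmDiff_Icc_subset a b a' b')
    _ ≤ volume (uIcc a a') + volume (uIcc b b') := measure_union_le _ _
    _ = edist a a' + edist b b' := by
        simp only [Real.volume_interval, edist_dist, Real.dist_eq, abs_sub_comm]

lemma Real.volume_iUnion_Icc_symmDiff_iUnion_Icc_le {ι : Type*} [Fintype ι] (l r l' r' : ι → ℝ) :
    volume ((⋃ i, Icc (l i) (r i)) ∆ ⋃ i, Icc (l' i) (r' i)) ≤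
      ∑ i, (edist (l i) (l' i) + edist (r i) (r' i)) :=
  calc _ ≤ volume (⋃ i, Icc (l i) (r i) ∆ Icc (l' i) (r' i)) :=
        measure_mono iUnion_symmDiff_iUnion_subset
    _ ≤ ∑ i, volume (Icc (l i) (r i) ∆ Icc (l' i) (r' i)) := measure_iUnion_fintype_le _ _
    _ ≤ _ := Finset.sum_le_sum fun _ _ => volume_Icc_symmDiff_Icc_le _ _ _ _

namespace MeasureTheory

variable {ι : Type*} [Finite ι]

noncomputable def intervalUnionIndicatorLp (p : ℝ≥0∞) (s : Set ℝ) (l r : ι → ℝ) :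
    Lp ℝ p (volume.restrict s) :=
  indicatorConstLp p (s := ⋃ i, Icc (l i) (r i)) (.iUnion fun _ => measurableSet_Icc)
    (ne_top_of_le_ne_top (isCompact_iUnion fun _ => isCompact_Icc).measure_ne_top
      (Measure.restrict_le_self _)) 1

lemma intervalUnionIndicatorLp_coeFn (p : ℝ≥0∞) (s : Set ℝ) (l r : ι → ℝ) :
    intervalUnionIndicatorLp p s l r =ᵐ[volume.restrict s] (⋃ i, Icc (l i) (r i)).indicator 1 := by
  rw [intervalUnionIndicatorLp]
  exact indicatorConstLp_coeFn

lemma continuous_intervalUnionIndicatorLp (p : ℝ≥0∞) [Fact (1 ≤ p)] (hp : p ≠ ∞) (s : Set ℝ) :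
    Continuous fun lr : (ι → ℝ) × (ι → ℝ) => intervalUnionIndicatorLp p s lr.1 lr.2 := by
  have := Fintype.ofFinite ι
  refine continuous_indicatorConstLp_set
    (s := fun lr : (ι → ℝ) × (ι → ℝ) => ⋃ i, Icc (lr.1 i) (lr.2 i)) hp fun x => ?_
  have hbound : Tendsto (fun y : (ι → ℝ) × (ι → ℝ) =>
      ∑ i, (edist (y.1 i) (x.1 i) + edist (y.2 i) (x.2 i))) (𝓝 x) (𝓝 0) := by
    simpa using ((by fun_prop : Continuous fun y : (ι → ℝ) × (ι → ℝ) =>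
      ∑ i, (edist (y.1 i) (x.1 i) + edist (y.2 i) (x.2 i))).tendsto x)
  exact tendsto_of_tendsto_of_tendsto_of_le_of_le tendsto_const_nhds hbound (fun _ => zero_le)
    fun _ => (Measure.restrict_le_self _).trans
      (Real.volume_iUnion_Icc_symmDiff_iUnion_Icc_le _ _ _ _)

end MeasureTheory

lemma isCompact_setOf_forall_mem_Icc_add_le_one (ι : Type*) [Finite ι] :
    IsCompact {q : (ι → ℝ) × (ι → ℝ) |
      (∀ i, q.1 i ∈ Icc (0 : ℝ) 1) ∧ (∀ i, q.2 i ∈ Icc (0 : ℝ) 1) ∧ ∀ i, q.1 i + q.2 i ≤ 1} := by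
  refine IsCompact.of_isClosed_subset (s := Icc (0 : ι → ℝ) 1 ×ˢ Icc 0 1)
    (isCompact_Icc.prod isCompact_Icc) ?_ ?_
  · simp only [ofPred_and, ofPred_forall]
    exact (isClosed_iInter fun i => isClosed_Icc.preimage (by fun_prop)).inter
      ((isClosed_iInter fun i => isClosed_Icc.preimage (by fun_prop)).inter
        (isClosed_iInter fun i => isClosed_le (by fun_prop) continuous_const))
  · rintro q ⟨h₁, h₂, -⟩
    exact ⟨⟨fun i => (h₁ i).1, fun i => (h₁ i).2⟩, ⟨fun i => (h₂ i).1, fun i => (h₂ i).2⟩⟩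

/-- The set of (classes of) indicator functions of unions of `n` closed subintervals of
`[0,1]` is a compact subset of `L¹([0,1];ℝ)`. -/
theorem stmt19 (n : ℕ) :
    IsCompact {f : Lp ℝ 1 (volume.restrict (Set.Icc (0 : ℝ) 1)) |
      ∃ a e : Fin n → ℝ, (∀ i, a i ∈ Set.Icc (0 : ℝ) 1) ∧
        (∀ i, e i ∈ Set.Icc (0 : ℝ) 1) ∧ (∀ i, a i + e i ≤ 1) ∧
        (f : ℝ → ℝ) =ᵐ[volume.restrict (Set.Icc (0 : ℝ) 1)]
          Set.indicator (⋃ i, Set.Icc (a i) (a i + e i)) 1} := by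
  convert (isCompact_setOf_forall_mem_Icc_add_le_one (Fin n)).image
    ((continuous_intervalUnionIndicatorLp 1 ENNReal.one_ne_top (Icc 0 1)).comp
      (continuous_fst.prodMk (continuous_fst.add continuous_snd))) using 1
  ext f
  constructor
  · rintro ⟨a, e, ha, he, hae, hf⟩
    exact ⟨(a, e), ⟨ha, he, hae⟩, Lp.ext ((intervalUnionIndicatorLp_coeFn _ _ _ _).trans hf.symm)⟩
  · rintro ⟨q, ⟨ha, he, hae⟩, rfl⟩
    exact ⟨q.1, q.2, ha, he, hae, intervalUnionIndicatorLp_coeFn _ _ _ _⟩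
end
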